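/- With the notation of the previous statement, the sum of Weyl dimensions over Young diagrams λ of N boxes with at most r rows satisfying d(p_λ, p) ≤ x is at most (N+d−1)^{(2dr−r(r+1))/2 − m} · (4Nx + r)^{m+r−1}. -/

import Mathlib

/-!
Dividing by the Vandermonde product `∏_{i<j} (j - i) = ∏_{k<d} k!`, the Weyl dimension of `μ`
is `∏_{i<j} (1 + (μ_i - μ_j) / (j - i))`, and each factor lies in `[1, 1 + μ_i - μ_j]`. A factor
is `1` when both rows are empty (`r ≤ i`); for the `m` pairs with `i < r` and `p_i = p_j`,
closeness to `p` in total variation forces `μ_i - μ_j ≤ 4Nx`; each of the other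
`(2dr - r(r+1))/2 - m` pairs with `i < r` contributes at most `N + d - 1`. A diagram in the ball
is determined by its first `r - 1` rows, each an integer within `2Nx` of `N p_i`, so the ball
has at most `(4Nx + 1)^(r-1)` elements.
-/

open scoped Classical

/-- The Weyl dimension formula for the irreducible `GL(d)` representation labeled by a
Young diagram `λ = (λ_1 ≥ … ≥ λ_d ≥ 0)` (0-indexed here). -/
noncomputable def weylDim (d : ℕ) (lam : Fin d → ℕ) : ℝ :=
  (∏ p ∈ Finset.univ.filter (fun p : Fin d × Fin d => p.1 < p.2),
      ((lam p.1 : ℝ) - (lam p.2 : ℝ) - (p.1 : ℝ) + (p.2 : ℝ))) /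
    ∏ k ∈ Finset.range d, (Nat.factorial k : ℝ)

/-- The set of Young diagrams with `N` boxes and at most `r` rows, encoded as weakly
decreasing tuples of `r` entries in `{0, …, N}` summing to `N`. -/
noncomputable def youngDiagrams (N r : ℕ) : Finset (Fin r → Fin (N + 1)) :=
  Finset.univ.filter (fun lam =>
    (∀ i j : Fin r, i ≤ j → (lam j : ℕ) ≤ (lam i : ℕ)) ∧ ∑ i, (lam i : ℕ) = N)

/-- Extension of an `r`-row diagram to `d ≥ r` rows by appending zero rows. -/
def padDiagram (d r N : ℕ) (lam : Fin r → Fin (N + 1)) : Fin d → ℕ :=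
  fun i => if h : (i : ℕ) < r then (lam ⟨i, h⟩ : ℕ) else 0

/-- The total variation distance between the normalized diagram `λ/N` and the
spectrum `p`: `d(p_λ, p) = (1/2) ∑_i |λ_i/N - p_i|`. -/
noncomputable def tvDist (d N : ℕ) (lam : Fin d → ℕ) (p : Fin d → ℝ) : ℝ :=
  (1 / 2) * ∑ i, |(lam i : ℝ) / (N : ℝ) - p i|

/-- The degeneracy parameter `m = ∑_{i<r} μ_i`, with `μ_i = #{j > i : p_j = p_i}`. -/
noncomputable def degenCount (d r : ℕ) (p : Fin d → ℝ) : ℕ :=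
  ∑ i ∈ Finset.univ.filter (fun i : Fin d => (i : ℕ) < r),
    (Finset.univ.filter (fun j : Fin d => i < j ∧ p j = p i)).card

open Finset

theorem card_filter_prod_eq_sum_card_filter {α β : Type*} [Fintype α] [Fintype β] (S : α → Prop)
    [DecidablePred S] (R : α → β → Prop) [∀ a, DecidablePred (R a)] :
    #({q : α × β | S q.1 ∧ R q.1 q.2} : Finset _) =
      ∑ a ∈ ({a | S a} : Finset α), #{b | R a b} := by
  simp only [card_filter, Fintype.sum_prod_type, sum_filter, ite_and]
  refine sum_congr rfl fun a _ => ?_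
  split_ifs <;> simp

theorem two_mul_sum_range_sub_add (d r : ℕ) (hrd : r ≤ d) :
    2 * ∑ k ∈ range r, (d - 1 - k) + r * (r + 1) = 2 * d * r := by
  induction r with
  | zero => simp
  | succ r ih =>
    have hlast : 2 * (d - 1 - r) + (r + 1) * (r + 2) = 2 * d + r * (r + 1) := by
      zify [show 1 ≤ d by omega, show r ≤ d - 1 by omega]
      ring
    rw [sum_range_succ]
    linarith [ih (by omega)]

theorem Finset.prod_le_pow_card_mul_pow_card_sdiff {ι R : Type*} [CommSemiring R] [PartialOrder R]
    [IsOrderedRing R] {s t : Finset ι} (hts : t ⊆ s) {f : ι → R} {a b : R}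
    (h0 : ∀ i ∈ s, 0 ≤ f i) (ha : ∀ i ∈ t, f i ≤ a) (hb : ∀ i ∈ s \ t, f i ≤ b) :
    ∏ i ∈ s, f i ≤ a ^ #t * b ^ (#s - #t) := by
  have ht : ∏ i ∈ t, f i ≤ a ^ #t :=
    (prod_le_prod (fun i hi => h0 i (hts hi)) ha).trans_eq (prod_const a)
  have hst : ∏ i ∈ s \ t, f i ≤ b ^ #(s \ t) :=
    (prod_le_prod (fun i hi => h0 i (sdiff_subset hi)) hb).trans_eq (prod_const b)
  rw [← prod_sdiff hts, ← card_sdiff_of_subset hts, mul_comm]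
  exact mul_le_mul ht hst (prod_nonneg fun i hi => h0 i (sdiff_subset hi))
    ((prod_nonneg fun i hi => h0 i (hts hi)).trans ht)

theorem Fin.eq_of_init_eq_of_sum_eq {n : ℕ} {M : Type*} [AddCommMonoid M] [IsLeftCancelAdd M]
    {f g : Fin (n + 1) → M} (hinit : Fin.init f = Fin.init g) (hsum : ∑ i, f i = ∑ i, g i) :
    f = g := by
  have hlast : f (Fin.last n) = g (Fin.last n) := by
    rw [Fin.sum_univ_castSucc, Fin.sum_univ_castSucc] at hsum
    exact add_left_cancel (by simpa only [← Fin.init_def, hinit] using hsum)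
  rw [← Fin.snoc_init_self f, ← Fin.snoc_init_self g, hinit, hlast]

theorem Int.card_Icc_ceil_floor_le {a b : ℝ} (hab : a ≤ b) :
    (#(Icc ⌈a⌉ ⌊b⌋) : ℝ) ≤ b - a + 1 := by
  rw [Int.card_Icc, ← Int.cast_natCast, Int.toNat_eq_max]
  push_cast
  refine max_le ?_ (by linarith)
  linarith [Int.floor_le b, Int.le_ceil a]

theorem prod_sub_of_lt_eq_prod_factorial (d : ℕ) :
    ∏ q ∈ ({q : Fin d × Fin d | q.1 < q.2} : Finset _), ((q.2 : ℝ) - q.1) =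
      ∏ k ∈ range d, (k.factorial : ℝ) := by
  cases d with
  | zero => simp
  | succ n =>
    rw [← Nat.cast_prod, Nat.prod_range_succ_factorial,
      ← Matrix.det_vandermonde_id_eq_superFactorial, Matrix.det_vandermonde, prod_filter,
      Fintype.prod_prod_type]
    refine prod_congr rfl fun i _ => ?_
    rw [← prod_filter, filter_lt_eq_Ioi]

theorem weylDim_eq_prod (d : ℕ) (μ : Fin d → ℕ) :
    weylDim d μ = ∏ q ∈ ({q : Fin d × Fin d | q.1 < q.2} : Finset _),
      (1 + ((μ q.1 : ℝ) - μ q.2) / ((q.2 : ℝ) - q.1)) := by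
  rw [weylDim, ← prod_sub_of_lt_eq_prod_factorial, ← prod_div_distrib]
  refine prod_congr rfl fun q hq => ?_
  have hq : (q.1 : ℝ) < q.2 := by simpa using hq
  field_simp [(sub_pos.mpr hq).ne']
  ring

def leadingPairs (d r : ℕ) : Finset (Fin d × Fin d) :=
  {q | (q.1 : ℕ) < r ∧ q.1 < q.2}

noncomputable def degeneratePairs (d r : ℕ) (p : Fin d → ℝ) : Finset (Fin d × Fin d) :=
  {q | (q.1 : ℕ) < r ∧ q.1 < q.2 ∧ p q.2 = p q.1}

theorem card_degeneratePairs (d r : ℕ) (p : Fin d → ℝ) :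
    #(degeneratePairs d r p) = degenCount d r p :=
  card_filter_prod_eq_sum_card_filter (fun i : Fin d => (i : ℕ) < r) fun i j => i < j ∧ p j = p i

theorem card_leadingPairs (d r : ℕ) (hrd : r ≤ d) :
    #(leadingPairs d r) = (2 * d * r - r * (r + 1)) / 2 := by
  have hsum : ∑ i ∈ ({i : Fin d | (i : ℕ) < r} : Finset _), (d - 1 - i) =
      ∑ k ∈ range r, (d - 1 - k) := by
    rw [sum_filter, Fin.sum_univ_eq_sum_range (fun k => if k < r then d - 1 - k else 0),
      ← sum_filter]
    congr 1
    ext k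
    simp only [mem_filter, mem_range]
    omega
  rw [leadingPairs,
    card_filter_prod_eq_sum_card_filter (fun i : Fin d => (i : ℕ) < r) fun i j => i < j]
  simp only [filter_lt_eq_Ioi, Fin.card_Ioi]
  have := two_mul_sum_range_sub_add d r hrd
  omega

theorem weylDim_le {d r N : ℕ} (hrd : r ≤ d) (p : Fin d → ℝ) {μ : Fin d → ℕ} (hμ : Antitone μ)
    (hμN : ∀ i, μ i ≤ N) (hμr : ∀ i : Fin d, r ≤ (i : ℕ) → μ i = 0) {c : ℝ}
    (hc : ∀ i j, p j = p i → (μ i : ℝ) - μ j ≤ c) :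
    weylDim d μ ≤ (1 + c) ^ degenCount d r p *
      ((N : ℝ) + d - 1) ^ ((2 * d * r - r * (r + 1)) / 2 - degenCount d r p) := by
  set g : Fin d × Fin d → ℝ := fun q => 1 + ((μ q.1 : ℝ) - μ q.2) / ((q.2 : ℝ) - q.1)
  have hg : ∀ q : Fin d × Fin d, q.1 < q.2 → 1 ≤ g q ∧ g q ≤ 1 + ((μ q.1 : ℝ) - μ q.2) := by
    intro q hq
    have hgap : (1 : ℝ) ≤ (q.2 : ℝ) - q.1 := by
      rw [le_sub_iff_add_le']; exact_mod_cast Fin.lt_def.mp hq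
    have hdiff : (0 : ℝ) ≤ (μ q.1 : ℝ) - μ q.2 := sub_nonneg.mpr (by exact_mod_cast hμ hq.le)
    exact ⟨le_add_of_nonneg_right (div_nonneg hdiff (zero_le_one.trans hgap)),
      add_le_add_right (div_le_self hdiff hgap) 1⟩
  have hPF : leadingPairs d r ⊆ ({q | q.1 < q.2} : Finset _) := by
    intro q; simp +contextual [leadingPairs]
  have hAP : degeneratePairs d r p ⊆ leadingPairs d r := by
    intro q; simp +contextual [leadingPairs, degeneratePairs]
  have htrail : ∀ q ∈ ({q | q.1 < q.2} : Finset _), q ∉ leadingPairs d r → g q = 1 := by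
    intro q hq hqP
    have hlt : q.1 < q.2 := by simpa using hq
    have h1 : r ≤ (q.1 : ℕ) := by
      by_contra h
      exact hqP (by simp [leadingPairs, hlt]; omega)
    simp [g, hμr q.1 h1, hμr q.2 (h1.trans (Fin.lt_def.mp hlt).le)]
  rw [weylDim_eq_prod, ← prod_subset hPF htrail, ← card_leadingPairs d r hrd,
    ← card_degeneratePairs]
  refine prod_le_pow_card_mul_pow_card_sdiff hAP
    (fun q hq => ?_) (fun q hq => ?_) (fun q hq => ?_)
  · simp only [leadingPairs, mem_filter, mem_univ, true_and] at hq
    exact zero_le_one.trans (hg q hq.2).1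
  · simp only [degeneratePairs, mem_filter, mem_univ, true_and] at hq
    linarith [(hg q hq.2.1).2, hc q.1 q.2 hq.2.2]
  · simp only [leadingPairs, mem_sdiff, mem_filter, mem_univ, true_and] at hq
    have hd : (2 : ℝ) ≤ d := by
      have := Fin.lt_def.mp hq.1.2
      exact_mod_cast (show 2 ≤ d by omega)
    have hN1 : (μ q.1 : ℝ) ≤ N := by exact_mod_cast hμN q.1
    linarith [(hg q hq.1.2).2, (Nat.cast_nonneg (μ q.2) : (0 : ℝ) ≤ _)]

section padDiagram

variable {d r N : ℕ} (lam : Fin r → Fin (N + 1))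

theorem padDiagram_castLE (hrd : r ≤ d) (i : Fin r) :
    padDiagram d r N lam (Fin.castLE hrd i) = lam i := by
  simp [padDiagram]

theorem padDiagram_of_le {i : Fin d} (hi : r ≤ (i : ℕ)) : padDiagram d r N lam i = 0 := by
  simp [padDiagram, hi]

theorem padDiagram_le (i : Fin d) : padDiagram d r N lam i ≤ N := by
  unfold padDiagram
  split_ifs
  exacts [Fin.is_le _, N.zero_le]

theorem antitone_padDiagram (hlam : ∀ i j : Fin r, i ≤ j → (lam j : ℕ) ≤ (lam i : ℕ)) :
    Antitone (padDiagram d r N lam) := by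
  intro i j hij
  unfold padDiagram
  split_ifs with hj hi hi
  · exact hlam _ _ hij
  · exact absurd ((Fin.le_def.mp hij).trans_lt hj) hi
  all_goals exact Nat.zero_le _

end padDiagram

theorem abs_sub_mul_le_of_tvDist_le {d N : ℕ} (hN : 0 < N) {μ : Fin d → ℕ} {p : Fin d → ℝ}
    {x : ℝ} (h : tvDist d N μ p ≤ x) (k : Fin d) : |(μ k : ℝ) - N * p k| ≤ 2 * N * x := by
  have hN' : (0 : ℝ) < N := by exact_mod_cast hN
  have hk : |(μ k : ℝ) / N - p k| ≤ 2 * x := by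
    have := single_le_sum (f := fun i => |(μ i : ℝ) / N - p i|) (fun i _ => abs_nonneg _)
      (mem_univ k)
    rw [tvDist] at h
    linarith
  calc |(μ k : ℝ) - N * p k| = |N * ((μ k : ℝ) / N - p k)| := by
        rw [mul_sub, mul_div_cancel₀ _ hN'.ne']
    _ = N * |(μ k : ℝ) / N - p k| := by rw [abs_mul, abs_of_pos hN']
    _ ≤ 2 * N * x := by nlinarith

theorem card_youngDiagrams_filter_abs_sub_le (N r : ℕ) (c : Fin r → ℝ) {w : ℝ} (hw : 0 ≤ w) :
    (#{lam ∈ youngDiagrams N r | ∀ i, |((lam i : ℕ) : ℝ) - c i| ≤ w} : ℝ) ≤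
      (2 * w + 1) ^ (r - 1) := by
  cases r with
  | zero => simpa using card_le_univ (α := Fin 0 → Fin (N + 1)) _
  | succ r =>
    set T := {lam ∈ youngDiagrams N (r + 1) | ∀ i, |((lam i : ℕ) : ℝ) - c i| ≤ w}
    set box := Fintype.piFinset fun i : Fin r => Icc ⌈c i.castSucc - w⌉ ⌊c i.castSucc + w⌋
    set φ : (Fin (r + 1) → Fin (N + 1)) → Fin r → ℤ := fun lam i => ((lam i.castSucc : ℕ) : ℤ)
    have hmaps : ∀ lam ∈ T, φ lam ∈ box := by
      intro lam hlam
      refine Fintype.mem_piFinset.mpr fun i => ?_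
      have := abs_le.mp ((mem_filter.mp hlam).2 i.castSucc)
      simp only [mem_Icc, Int.ceil_le, Int.le_floor, φ]
      push_cast
      constructor <;> linarith
    have hinj : Set.InjOn φ T := by
      intro lam hlam lam' hlam' h
      have hsum := (mem_filter.mp (mem_filter.mp hlam).1).2.2.trans
        (mem_filter.mp (mem_filter.mp hlam').1).2.2.symm
      have := Fin.eq_of_init_eq_of_sum_eq (f := fun i => (lam i : ℕ)) (g := fun i => (lam' i : ℕ))
        (funext fun i => by simpa [φ, Fin.init] using congrFun h i) hsum
      exact funext fun i => Fin.ext (congrFun this i)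
    calc (#T : ℝ) ≤ #box := by exact_mod_cast card_le_card_of_injOn φ hmaps hinj
      _ = ∏ i : Fin r, (#(Icc ⌈c i.castSucc - w⌉ ⌊c i.castSucc + w⌋) : ℝ) := by
        rw [Fintype.card_piFinset]; push_cast; rfl
      _ ≤ ∏ _i : Fin r, (2 * w + 1) :=
        prod_le_prod (fun _ _ => Nat.cast_nonneg _)
          fun i _ => (Int.card_Icc_ceil_floor_le (by linarith)).trans_eq (by ring)
      _ = (2 * w + 1) ^ (r + 1 - 1) := by simp

theorem weylDim_padDiagram_le_of_tvDist_le {d r N : ℕ} (hrd : r ≤ d) (hN : 0 < N)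
    (p : Fin d → ℝ) {x : ℝ} {lam : Fin r → Fin (N + 1)} (hlam : lam ∈ youngDiagrams N r)
    (hball : tvDist d N (padDiagram d r N lam) p ≤ x) :
    weylDim d (padDiagram d r N lam) ≤ (1 + 4 * N * x) ^ degenCount d r p *
      ((N : ℝ) + d - 1) ^ ((2 * d * r - r * (r + 1)) / 2 - degenCount d r p) := by
  refine weylDim_le hrd p (antitone_padDiagram lam (mem_filter.mp hlam).2.1)
    (padDiagram_le lam) (fun _ => padDiagram_of_le lam) fun i j hij => ?_
  have hi := abs_le.mp (abs_sub_mul_le_of_tvDist_le hN hball i)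
  have hj := abs_le.mp (abs_sub_mul_le_of_tvDist_le hN hball j)
  rw [hij] at hj
  linarith

theorem card_tvDist_ball_le {d r N : ℕ} (hrd : r ≤ d) (hN : 0 < N) (p : Fin d → ℝ) {x : ℝ}
    (hx : 0 ≤ x) :
    (#{lam ∈ youngDiagrams N r | tvDist d N (padDiagram d r N lam) p ≤ x} : ℝ) ≤
      (1 + 4 * N * x) ^ (r - 1) := by
  refine (Nat.cast_le.mpr (card_le_card fun lam hlam => ?_)).trans
    ((card_youngDiagrams_filter_abs_sub_le N r (fun i => N * p (Fin.castLE hrd i))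
      (w := 2 * N * x) (by positivity)).trans_eq (by ring))
  obtain ⟨hlam, hball⟩ := mem_filter.mp hlam
  refine mem_filter.mpr ⟨hlam, fun i => ?_⟩
  simpa only [padDiagram_castLE] using abs_sub_mul_le_of_tvDist_le hN hball (Fin.castLE hrd i)

theorem total_dimension_ball_bound_general (d r N : ℕ) (hr : 1 ≤ r) (hrd : r ≤ d) (hN : 1 ≤ N)
    (p : Fin d → ℝ) (x : ℝ) (hx : 0 < x) :
    ∑ lam ∈ (youngDiagrams N r).filter
        (fun lam => tvDist d N (padDiagram d r N lam) p ≤ x),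
      weylDim d (padDiagram d r N lam)
    ≤ ((N : ℝ) + d - 1) ^ ((2 * d * r - r * (r + 1)) / 2 - degenCount d r p) *
        (4 * (N : ℝ) * x + r) ^ (degenCount d r p + r - 1) := by
  set m := degenCount d r p
  set B : ℝ := (N : ℝ) + d - 1
  set E := (2 * d * r - r * (r + 1)) / 2 - m
  have hB : 0 ≤ B := by
    have : (1 : ℝ) ≤ N := by exact_mod_cast hN
    linarith [(Nat.cast_nonneg d : (0 : ℝ) ≤ d)]
  calc _ ≤ #{lam ∈ youngDiagrams N r | tvDist d N (padDiagram d r N lam) p ≤ x} •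
          ((1 + 4 * N * x) ^ m * B ^ E) :=
        sum_le_card_nsmul _ _ _ fun lam hlam =>
          weylDim_padDiagram_le_of_tvDist_le hrd hN p (mem_filter.mp hlam).1 (mem_filter.mp hlam).2
    _ ≤ (1 + 4 * N * x) ^ (r - 1) * ((1 + 4 * N * x) ^ m * B ^ E) := by
        rw [nsmul_eq_mul]; gcongr; exact card_tvDist_ball_le hrd hN p hx.le
    _ = B ^ E * (1 + 4 * N * x) ^ (m + r - 1) := by
        rw [show m + r - 1 = m + (r - 1) by omega, pow_add]; ring
    _ ≤ B ^ E * (4 * N * x + r) ^ (m + r - 1) := by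
        gcongr B ^ E * ?_ ^ _
        linarith [(Nat.one_le_cast.mpr hr : (1 : ℝ) ≤ r)]

/-- With `p = (p_1, …, p_d)`, `p_1 ≥ … ≥ p_r > p_{r+1} = … = p_d = 0`, the sum of Weyl
dimensions over Young diagrams `λ` of `N` boxes with at most `r` rows satisfying
`d(p_λ, p) ≤ x` is at most `(N+d-1)^((2dr - r(r+1))/2 - m) ⬝ (4Nx + r)^(m+r-1)`. -/
theorem total_dimension_ball_bound (d r N : ℕ) (hr : 1 ≤ r) (hrd : r ≤ d) (hN : 1 ≤ N)
    (p : Fin d → ℝ) (hpmono : ∀ i j : Fin d, i ≤ j → p j ≤ p i)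
    (hppos : ∀ i : Fin d, (i : ℕ) < r → 0 < p i)
    (hpzero : ∀ i : Fin d, r ≤ (i : ℕ) → p i = 0)
    (x : ℝ) (hx : 0 < x) :
    ∑ lam ∈ (youngDiagrams N r).filter
        (fun lam => tvDist d N (padDiagram d r N lam) p ≤ x),
      weylDim d (padDiagram d r N lam)
    ≤ ((N : ℝ) + d - 1) ^ ((2 * d * r - r * (r + 1)) / 2 - degenCount d r p) *
        (4 * (N : ℝ) * x + r) ^ (degenCount d r p + r - 1) :=
  total_dimension_ball_bound_general d r N hr hrd hN p x hx
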